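/- (δ-density forces all cylinders to be visited.) In the same setting, set κ = r_min ε. If the set {v_0, S_{i_1}v_0, ..., S_{i_n}···S_{i_1}v_0} is κδ-dense in F, then for every j ∈ P_δ there exists 0 ≤ k ≤ n with [i_k...i_1 i_0] ⊆ [j]. -/

import Mathlib

/-- The cylinder set of a finite word: infinite sequences beginning with that word. -/
def cyl {N : ℕ} (l : List (Fin N)) : Set (ℕ → Fin N) :=
  {ω | ∀ k : Fin l.length, ω k = l.get k}

/-- Product of contraction ratios along a word. -/
def rword {N : ℕ} (r : Fin N → ℝ) (l : List (Fin N)) : ℝ := (l.map r).prod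

/-- The stopping set P_δ = { i : r_i ≤ δ < r_{i^-} }. -/
def Pdelta {N : ℕ} (r : Fin N → ℝ) (δ : ℝ) : Set (List (Fin N)) :=
  {l | rword r l ≤ δ ∧ δ < rword r l.dropLast}


/-- Composition S_i = S_{i_1} ∘ ⋯ ∘ S_{i_n} along a word. -/
def Sword {N : ℕ} {X : Type*} (S : Fin N → X → X) (l : List (Fin N)) (v : X) : X :=
  l.foldr (fun a w => S a w) v

/-- The chaos game orbit: x_0 = v, x_{k+1} = S_{i_{k+1}} x_k, where i_{k+1} = ω k. -/
def orbit {N : ℕ} {X : Type*} (S : Fin N → X → X) (ω : ℕ → Fin N) (v : X) : ℕ → X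
  | 0 => v
  | k + 1 => S (ω k) (orbit S ω v k)

/-- The word i_k i_{k-1} ... i_1 of the first k chosen letters, most recent first
(here i_{m} = ω (m-1)). -/
def histWord {N : ℕ} (ω : ℕ → Fin N) (k : ℕ) : List (Fin N) :=
  List.ofFn (fun t : Fin k => ω (k - 1 - (t : ℕ)))

/-!
Since `j ∈ P_δ` has `r_j > r_min δ`, the density radius `κδ = r_min ε δ` is smaller than
`r_j ε`, so some orbit point `S_w v` with `w = i_k ⋯ i_1 i_0` and `v ∈ F` lies in the ball
`B(S_j x, r_j ε) = S_j B(x, ε) ⊆ S_j U`. Under the open set condition the images `S_a U` are open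
and pairwise disjoint, and `F ⊆ closure U`; peeling off common letters, two addresses of the
same point, one started in `U` and one in `closure U`, cannot branch, so `j` and `w` are
comparable. As `r_w ≤ r_{i_0} ≤ δ`, `w` cannot be a proper prefix of `j ∈ P_δ`, hence
`j` is a prefix of `w`.
-/

open Set Function Metric

section Similarity

theorem continuous_of_dist_eq_mul {X Y : Type*} [PseudoMetricSpace X] [PseudoMetricSpace Y]
    {f : X → Y} {c : ℝ} (hf : ∀ u v, dist (f u) (f v) = c * dist u v) : Continuous f :=
  (LipschitzWith.of_dist_le_mul (K := c.toNNReal) fun u v => by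
    rw [hf]; exact mul_le_mul_of_nonneg_right (Real.le_coe_toNNReal c) dist_nonneg).continuous

theorem injective_of_dist_eq_mul {X Y : Type*} [MetricSpace X] [MetricSpace Y]
    {f : X → Y} {c : ℝ} (hc : 0 < c) (hf : ∀ u v, dist (f u) (f v) = c * dist u v) :
    Injective f := fun u v huv => by
  have h := hf u v
  rw [huv, dist_self] at h
  exact dist_eq_zero.1 ((mul_eq_zero.1 h.symm).resolve_left hc.ne')

variable {E : Type*} [NormedAddCommGroup E] [NormedSpace ℝ E] [StrictConvexSpace ℝ E]
  [FiniteDimensional ℝ E]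

-- Strict convexity makes an isometry affine, and an affine isometry of a finite-dimensional
-- space into itself is onto.
theorem Isometry.surjective_of_finiteDimensional {f : E → E} (hf : Isometry f) :
    Surjective f :=
  haveI : Inhabited E := ⟨0⟩
  (hf.affineIsometryOfStrictConvexSpace.toAffineIsometryEquiv rfl).surjective

theorem surjective_of_dist_eq_mul {f : E → E} {c : ℝ} (hc : 0 < c)
    (hf : ∀ u v, dist (f u) (f v) = c * dist u v) : Surjective f := by
  have hiso : Isometry (c⁻¹ • f) := Isometry.of_dist_eq fun u v => by
    rw [Pi.smul_apply, Pi.smul_apply, dist_smul₀, hf, Real.norm_eq_abs, abs_inv, abs_of_pos hc,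
      inv_mul_cancel_left₀ hc.ne']
  intro y
  obtain ⟨u, hu⟩ := hiso.surjective_of_finiteDimensional (c⁻¹ • y)
  exact ⟨u, smul_right_injective E (inv_ne_zero hc.ne') hu⟩

theorem ball_subset_image_ball_of_dist_eq_mul {f : E → E} {c : ℝ} (hc : 0 < c)
    (hf : ∀ u v, dist (f u) (f v) = c * dist u v) (x : E) (ρ : ℝ) :
    ball (f x) (c * ρ) ⊆ f '' ball x ρ := by
  intro y hy
  obtain ⟨u, rfl⟩ := surjective_of_dist_eq_mul hc hf y
  rw [mem_ball, hf] at hy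
  exact ⟨u, mem_ball.2 (lt_of_mul_lt_mul_left hy hc.le), rfl⟩

theorem isOpenMap_of_dist_eq_mul {f : E → E} {c : ℝ} (hc : 0 < c)
    (hf : ∀ u v, dist (f u) (f v) = c * dist u v) : IsOpenMap f := by
  intro U hU
  rw [Metric.isOpen_iff] at hU ⊢
  rintro _ ⟨u, hu, rfl⟩
  obtain ⟨ρ, hρ, hsub⟩ := hU u hu
  exact ⟨c * ρ, mul_pos hc hρ, (ball_subset_image_ball_of_dist_eq_mul hc hf u ρ).trans
    (image_mono hsub)⟩

end Similarity

theorem subset_closure_of_contracting {X ι : Type*} [PseudoMetricSpace X] {S : ι → X → X}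
    {c : ℝ} (hc0 : 0 ≤ c) (hc1 : c < 1) (hS : ∀ i a b, dist (S i a) (S i b) ≤ c * dist a b)
    {F U : Set X} (hF : Bornology.IsBounded F) (hFcover : F ⊆ ⋃ i, S i '' F)
    (hU : ∀ i, MapsTo (S i) U U) (hUne : U.Nonempty) : F ⊆ closure U := by
  obtain ⟨x, hx⟩ := hUne
  obtain ⟨R, hR⟩ := hF.subset_closedBall x
  have hclose : ∀ m : ℕ, ∀ z ∈ F, ∃ u ∈ U, dist z u ≤ c ^ m * R := by
    intro m
    induction m with
    | zero => exact fun z hz => ⟨x, hx, by simpa using hR hz⟩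
    | succ m ih =>
      intro z hz
      obtain ⟨i, z', hz', rfl⟩ := mem_iUnion.1 (hFcover hz)
      obtain ⟨u, hu, hzu⟩ := ih z' hz'
      refine ⟨S i u, hU i hu, ?_⟩
      calc dist (S i z') (S i u) ≤ c * dist z' u := hS i z' u
        _ ≤ c * (c ^ m * R) := mul_le_mul_of_nonneg_left hzu hc0
        _ = c ^ (m + 1) * R := by ring
  intro z hz
  refine Metric.mem_closure_iff.2 fun η hη => ?_
  have hlim : Filter.Tendsto (fun m : ℕ => c ^ m * R) Filter.atTop (nhds 0) := by
    simpa using (tendsto_pow_atTop_nhds_zero_of_lt_one hc0 hc1).mul_const R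
  obtain ⟨m, hm⟩ := (hlim.eventually (gt_mem_nhds hη)).exists
  obtain ⟨u, hu, hzu⟩ := hclose m z hz
  exact ⟨u, hu, hzu.trans_lt hm⟩

theorem subset_closure_of_ratio_lt_one {X ι : Type*} [PseudoMetricSpace X] [Finite ι]
    {S : ι → X → X} {r : ι → ℝ} (hr : ∀ i, r i ∈ Ioo (0 : ℝ) 1)
    (hS : ∀ i a b, dist (S i a) (S i b) = r i * dist a b) {F U : Set X}
    (hF : Bornology.IsBounded F) (hFcover : F ⊆ ⋃ i, S i '' F) (hU : ∀ i, MapsTo (S i) U U)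
    (hUne : U.Nonempty) : F ⊆ closure U := by
  cases isEmpty_or_nonempty ι
  · exact fun z hz => by simpa using hFcover hz
  obtain ⟨imax, himax⟩ := Finite.exists_max r
  exact subset_closure_of_contracting (hr imax).1.le (hr imax).2
    (fun i a b => (hS i a b).trans_le (mul_le_mul_of_nonneg_right (himax i) dist_nonneg))
    hF hFcover hU hUne

section Words

variable {N : ℕ} {X : Type*}

theorem rword_cons (r : Fin N → ℝ) (a : Fin N) (l : List (Fin N)) :
    rword r (a :: l) = r a * rword r l := by
  simp [rword]

theorem rword_append (r : Fin N → ℝ) (l₁ l₂ : List (Fin N)) :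
    rword r (l₁ ++ l₂) = rword r l₁ * rword r l₂ := by
  simp [rword]

theorem rword_pos {r : Fin N → ℝ} (hr : ∀ i, 0 < r i) (l : List (Fin N)) : 0 < rword r l := by
  induction l with
  | nil => simp [rword]
  | cons a l ih => rw [rword_cons]; exact mul_pos (hr a) ih

theorem rword_anti_of_sublist {r : Fin N → ℝ} (hr : ∀ i, r i ∈ Ioo (0 : ℝ) 1)
    {l₁ l₂ : List (Fin N)} (h : l₁.Sublist l₂) : rword r l₂ ≤ rword r l₁ := by
  induction h with
  | slnil => rfl
  | cons a _ ih =>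
    rw [rword_cons]
    exact (mul_le_of_le_one_left (rword_pos (fun i => (hr i).1) _).le (hr a).2.le).trans ih
  | cons_cons a _ ih =>
    rw [rword_cons, rword_cons]
    exact mul_le_mul_of_nonneg_left ih (hr a).1.le

theorem ne_nil_of_mem_Pdelta {r : Fin N → ℝ} {δ : ℝ} {l : List (Fin N)} (hl : l ∈ Pdelta r δ) :
    l ≠ [] := by
  rintro rfl
  have := hl.1.trans_lt hl.2
  simp [rword] at this

theorem mul_lt_rword_of_mem_Pdelta {r : Fin N → ℝ} (hr : ∀ i, 0 < r i) {m : ℝ} (hm : 0 < m)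
    (hmr : ∀ i, m ≤ r i) {δ : ℝ} {l : List (Fin N)} (hl : l ∈ Pdelta r δ) :
    m * δ < rword r l := by
  have hne := ne_nil_of_mem_Pdelta hl
  rw [← List.dropLast_concat_getLast hne, rword_append]
  have hlast : rword r [l.getLast hne] = r (l.getLast hne) := by simp [rword]
  rw [hlast, mul_comm m]
  exact (mul_lt_mul_of_pos_right hl.2 hm).trans_le
    (mul_le_mul_of_nonneg_left (hmr _) (rword_pos hr _).le)

theorem eq_of_prefix_of_mem_Pdelta {r : Fin N → ℝ} (hr : ∀ i, r i ∈ Ioo (0 : ℝ) 1) {δ : ℝ}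
    {l w : List (Fin N)} (hl : l ∈ Pdelta r δ) (hw : w <+: l) (hwδ : rword r w ≤ δ) : w = l := by
  obtain ⟨t, rfl⟩ := hw
  rcases eq_or_ne t [] with rfl | ht
  · exact (List.append_nil w).symm
  · have hdrop : w <+: (w ++ t).dropLast := by
      rw [List.dropLast_append_of_ne_nil ht]; exact List.prefix_append _ _
    exact absurd ((rword_anti_of_sublist hr hdrop.sublist).trans hwδ) (not_le.2 hl.2)

theorem Sword_cons (S : Fin N → X → X) (a : Fin N) (l : List (Fin N)) (v : X) :
    Sword S (a :: l) v = S a (Sword S l v) := rfl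

theorem Sword_append (S : Fin N → X → X) (l₁ l₂ : List (Fin N)) (v : X) :
    Sword S (l₁ ++ l₂) v = Sword S l₁ (Sword S l₂ v) := by
  simp [Sword, List.foldr_append]

theorem Sword_mapsTo {S : Fin N → X → X} {A : Set X} (hA : ∀ i, MapsTo (S i) A A)
    (l : List (Fin N)) : MapsTo (Sword S l) A A := by
  induction l with
  | nil => exact mapsTo_id A
  | cons a l ih => exact (hA a).comp ih

theorem dist_Sword [PseudoMetricSpace X] {S : Fin N → X → X} {r : Fin N → ℝ}
    (hS : ∀ i u v, dist (S i u) (S i v) = r i * dist u v) (l : List (Fin N)) (u v : X) :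
    dist (Sword S l u) (Sword S l v) = rword r l * dist u v := by
  induction l with
  | nil => simp [Sword, rword]
  | cons a l ih => rw [Sword_cons, Sword_cons, hS, ih, rword_cons, mul_assoc]

theorem histWord_succ (ω : ℕ → Fin N) (k : ℕ) : histWord ω (k + 1) = ω k :: histWord ω k := by
  apply List.ext_getElem
  · simp [histWord]
  · intro i _ _
    rcases i with _ | i <;> simp [histWord]; congr 1; omega

theorem orbit_eq_Sword (S : Fin N → X → X) (ω : ℕ → Fin N) (v : X) (k : ℕ) :
    orbit S ω v k = Sword S (histWord ω k) v := by
  induction k with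
  | zero => rfl
  | succ k ih => rw [orbit, ih, histWord_succ, Sword_cons]

theorem cyl_subset_of_prefix {l₁ l₂ : List (Fin N)} (h : l₁ <+: l₂) : cyl l₂ ⊆ cyl l₁ := by
  intro ω hω k
  have := hω ⟨k, k.2.trans_le h.length_le⟩
  simp only [List.get_eq_getElem] at this ⊢
  rw [this, h.getElem k.2]

theorem prefix_or_prefix_of_Sword_eq [TopologicalSpace X] {S : Fin N → X → X} {U : Set X}
    (hinj : ∀ i, Injective (S i)) (hcont : ∀ i, Continuous (S i))
    (hopen : ∀ i, IsOpen (S i '' U)) (hU : ∀ i, MapsTo (S i) U U)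
    (hdisj : ∀ i j, i ≠ j → Disjoint (S i '' U) (S j '' U)) :
    ∀ {l₁ l₂ : List (Fin N)} {u y : X}, u ∈ U → y ∈ closure U →
      Sword S l₁ u = Sword S l₂ y → l₁ <+: l₂ ∨ l₂ <+: l₁
  | [], _, _, _, _, _, _ => Or.inl List.nil_prefix
  | _ :: _, [], _, _, _, _, _ => Or.inr List.nil_prefix
  | a :: l₁, b :: l₂, u, y, hu, hy, h => by
    have ha : Sword S (a :: l₁) u ∈ S a '' U := mem_image_of_mem _ (Sword_mapsTo hU l₁ hu)
    have hb : Sword S (b :: l₂) y ∈ closure (S b '' U) :=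
      image_closure_subset_closure_image (hcont b)
        (mem_image_of_mem _ (Sword_mapsTo (fun i => (hU i).closure (hcont i)) l₂ hy))
    obtain rfl : a = b := by
      by_contra hab
      exact disjoint_left.1 ((hdisj a b hab).closure_right (hopen a)) ha (h ▸ hb)
    simpa only [List.cons_prefix_cons, true_and] using
      prefix_or_prefix_of_Sword_eq hinj hcont hopen hU hdisj hu hy (hinj a h)

end Words

theorem stmt11_general {N d : ℕ}
    (S : Fin N → EuclideanSpace ℝ (Fin d) → EuclideanSpace ℝ (Fin d))
    (r : Fin N → ℝ) (hr : ∀ i, r i ∈ Set.Ioo (0 : ℝ) 1)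
    (hsim : ∀ i x y, dist (S i x) (S i y) = r i * dist x y)
    (rmin : ℝ) (hrmin : IsLeast (Set.range r) rmin)
    (F : Set (EuclideanSpace ℝ (Fin d)))
    (hFc : IsCompact F)
    (hFinv : F = ⋃ i, S i '' F)
    (U : Set (EuclideanSpace ℝ (Fin d)))
    (hUopen : IsOpen U)
    (hUsub : ∀ i, S i '' U ⊆ U)
    (hUdisj : ∀ i j, i ≠ j → Disjoint (S i '' U) (S j '' U))
    (x : EuclideanSpace ℝ (Fin d)) (hx : x ∈ F)
    (ε : ℝ) (hε : 0 < ε) (hball : Metric.ball x ε ⊆ U)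
    (κ : ℝ) (hκ : κ = rmin * ε)
    (δ : ℝ)
    (v0 : EuclideanSpace ℝ (Fin d))
    (i0 : List (Fin N)) (hi0 : i0 ∈ Pdelta r δ) (hv0 : v0 ∈ Sword S i0 '' F)
    (n : ℕ) (ω : ℕ → Fin N)
    (hdense : ∀ z ∈ F, ∃ k ≤ n, dist z (orbit S ω v0 k) ≤ κ * δ) :
    ∀ j ∈ Pdelta r δ, ∃ k ≤ n, cyl (histWord ω k ++ i0) ⊆ cyl j := by
  have hr0 : ∀ i, 0 < r i := fun i => (hr i).1
  obtain ⟨imin, rfl⟩ := hrmin.1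
  have hUmaps : ∀ i, MapsTo (S i) U U := fun i => mapsTo_iff_image_subset.2 (hUsub i)
  have hFmaps : ∀ i, MapsTo (S i) F F := fun i =>
    mapsTo_iff_image_subset.2 ((subset_iUnion (fun i => S i '' F) i).trans hFinv.ge)
  have hFU : F ⊆ closure U := subset_closure_of_ratio_lt_one hr hsim hFc.isBounded hFinv.le
    hUmaps ⟨x, hball (mem_ball_self hε)⟩
  intro j hj
  obtain ⟨k, hkn, hk⟩ := hdense _ (Sword_mapsTo hFmaps j hx)
  obtain ⟨v, hvF, rfl⟩ := hv0
  have hnear : orbit S ω (Sword S i0 v) k ∈ ball (Sword S j x) (rword r j * ε) := by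
    rw [mem_ball, dist_comm]
    calc _ ≤ κ * δ := hk
      _ = r imin * δ * ε := by rw [hκ]; ring
      _ < rword r j * ε := mul_lt_mul_of_pos_right
          (mul_lt_rword_of_mem_Pdelta hr0 (hr0 imin) (fun i => hrmin.2 ⟨i, rfl⟩) hj) hε
  obtain ⟨u, hu, huk⟩ :=
    ball_subset_image_ball_of_dist_eq_mul (rword_pos hr0 j) (dist_Sword hsim j) x ε hnear
  rw [orbit_eq_Sword, ← Sword_append] at huk
  refine ⟨k, hkn, ?_⟩
  rcases prefix_or_prefix_of_Sword_eq (fun i => injective_of_dist_eq_mul (hr0 i) (hsim i))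
    (fun i => continuous_of_dist_eq_mul (hsim i))
    (fun i => isOpenMap_of_dist_eq_mul (hr0 i) (hsim i) U hUopen) hUmaps hUdisj
    (hball hu) (hFU hvF) huk with h | h
  · exact cyl_subset_of_prefix h
  · rw [eq_of_prefix_of_mem_Pdelta hr hj h
      ((rword_anti_of_sublist hr (List.sublist_append_right _ _)).trans hi0.1)]

/-- with κ = r_min ε, if {v_0, S_{i_1}v_0, ..., S_{i_n}⋯S_{i_1}v_0}
is κδ-dense in F then the symbolic orbit visits every cylinder [j], j ∈ P_δ. -/
theorem stmt11 {N d : ℕ} (hN : 0 < N)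
    (S : Fin N → EuclideanSpace ℝ (Fin d) → EuclideanSpace ℝ (Fin d))
    (r : Fin N → ℝ) (hr : ∀ i, r i ∈ Set.Ioo (0 : ℝ) 1)
    (hsim : ∀ i x y, dist (S i x) (S i y) = r i * dist x y)
    (rmin : ℝ) (hrmin : IsLeast (Set.range r) rmin)
    (F : Set (EuclideanSpace ℝ (Fin d)))
    (hFc : IsCompact F) (hFne : F.Nonempty)
    (hFinv : F = ⋃ i, S i '' F)
    (U : Set (EuclideanSpace ℝ (Fin d)))
    (hUopen : IsOpen U) (hUbdd : Bornology.IsBounded U)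
    (hUsub : ∀ i, S i '' U ⊆ U)
    (hUdisj : ∀ i j, i ≠ j → Disjoint (S i '' U) (S j '' U))
    (x : EuclideanSpace ℝ (Fin d)) (hx : x ∈ F)
    (ε : ℝ) (hε : 0 < ε) (hball : Metric.ball x ε ⊆ U)
    (κ : ℝ) (hκ : κ = rmin * ε)
    (δ : ℝ) (hδ0 : 0 < δ) (hδ : δ < rmin)
    (v0 : EuclideanSpace ℝ (Fin d))
    (i0 : List (Fin N)) (hi0 : i0 ∈ Pdelta r δ) (hv0 : v0 ∈ Sword S i0 '' F)
    (n : ℕ) (ω : ℕ → Fin N)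
    (hdense : ∀ z ∈ F, ∃ k ≤ n, dist z (orbit S ω v0 k) ≤ κ * δ) :
    ∀ j ∈ Pdelta r δ, ∃ k ≤ n, cyl (histWord ω k ++ i0) ⊆ cyl j :=
  stmt11_general S r hr hsim rmin hrmin F hFc hFinv U hUopen hUsub hUdisj x hx ε hε hball κ hκ δ v0
    i0 hi0 hv0 n ω hdense
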